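/- arXiv:2604.02840 — 2 statements merged into one kernel-verified Lean document; each statement's English description precedes it below -/
import Mathlib

section
/- In the local setting of the W-method (γ = sep(D̃⋆) > 0, η = ‖Y_W − Y⋆‖_F ≤ γ/4), let Ẽ⋆ and Ẽ_W be defined entrywise by ẽ⋆ᵢᵢ = 0, ẽ⋆ᵢⱼ = (Y⋆)ᵢⱼ/(d̃⋆ⱼ − d̃⋆ᵢ) and ẽ_Wᵢᵢ = 0, ẽ_Wᵢⱼ = (Y_W)ᵢⱼ/(d̃ⱼ − d̃ᵢ) for i ≠ j. Then ‖Ẽ_W − Ẽ⋆‖_F ≤ (2/γ + 4‖Y⋆‖_F/γ²) η. -/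
/-!
Off the diagonal, `y' / b - y / a = (y' - y) / b - y * (b - a) / (a * b)`, where `a` and `b` are
the gaps `d̃⋆ⱼ - d̃⋆ᵢ` and `d̃ⱼ - d̃ᵢ`. The diagonals of `D̃` and `D̃⋆` differ by the diagonal of
`Y_W - Y⋆`, so `‖b - a‖ ≤ 2η ≤ γ / 2`, hence `‖b‖ ≥ γ / 2`, and every entry of `Ẽ_W - Ẽ⋆` is at
most `(2 / γ) ‖(Y_W - Y⋆)ᵢⱼ‖ + (4η / γ²) ‖(Y⋆)ᵢⱼ‖`. The triangle inequality for the Frobenius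
norm turns these entrywise bounds into the claim.
-/

open Matrix

noncomputable def frob {n : ℕ} (M : Matrix (Fin n) (Fin n) ℂ) : ℝ :=
  Real.sqrt (∑ i, ∑ j, ‖M i j‖ ^ 2)

section Frobenius

attribute [local instance] Matrix.frobeniusNormedAddCommGroup Matrix.frobeniusNormedSpace

variable {n : ℕ}

theorem frob_eq_frobenius_norm (M : Matrix (Fin n) (Fin n) ℂ) : frob M = ‖M‖ := by
  simp only [frob, frobenius_norm_def, Real.sqrt_eq_rpow, Real.rpow_two]

theorem norm_apply_le_frob (M : Matrix (Fin n) (Fin n) ℂ) (i j : Fin n) : ‖M i j‖ ≤ frob M := by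
  rw [frob, Real.le_sqrt (norm_nonneg _) (by positivity)]
  calc ‖M i j‖ ^ 2 ≤ ∑ b, ‖M i b‖ ^ 2 :=
        Finset.single_le_sum (fun b _ => sq_nonneg ‖M i b‖) (Finset.mem_univ j)
    _ ≤ ∑ a, ∑ b, ‖M a b‖ ^ 2 :=
        Finset.single_le_sum (f := fun a => ∑ b, ‖M a b‖ ^ 2)
          (fun a _ => by positivity) (Finset.mem_univ i)

theorem frob_le_frob_of_norm_apply_le {M N : Matrix (Fin n) (Fin n) ℂ}
    (h : ∀ i j, ‖M i j‖ ≤ ‖N i j‖) : frob M ≤ frob N := by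
  unfold frob
  gcongr with i _ j _
  exact h i j

theorem frob_le_of_norm_apply_le {M U V : Matrix (Fin n) (Fin n) ℂ} {a b : ℝ}
    (ha : 0 ≤ a) (hb : 0 ≤ b) (h : ∀ i j, ‖M i j‖ ≤ a * ‖U i j‖ + b * ‖V i j‖) :
    frob M ≤ a * frob U + b * frob V := by
  let absU := U.map fun z => (‖z‖ : ℂ)
  let absV := V.map fun z => (‖z‖ : ℂ)
  have hM : frob M ≤ ‖a • absU + b • absV‖ := by
    rw [← frob_eq_frobenius_norm]
    refine frob_le_frob_of_norm_apply_le fun i j => (h i j).trans_eq ?_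
    simp only [absU, absV, Matrix.add_apply, Matrix.smul_apply, map_apply, Complex.real_smul]
    rw [← Complex.ofReal_mul, ← Complex.ofReal_mul, ← Complex.ofReal_add, Complex.norm_real,
      Real.norm_of_nonneg (by positivity)]
  calc frob M ≤ ‖a • absU + b • absV‖ := hM
    _ ≤ ‖a • absU‖ + ‖b • absV‖ := norm_add_le _ _
    _ = a * frob U + b * frob V := by
      have hnorm : ∀ z : ℂ, ‖(‖z‖ : ℂ)‖ = ‖z‖ := fun z => by simp
      rw [norm_smul, norm_smul, Real.norm_of_nonneg ha, Real.norm_of_nonneg hb,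
        frobenius_norm_map_eq _ _ hnorm, frobenius_norm_map_eq _ _ hnorm,
        frob_eq_frobenius_norm, frob_eq_frobenius_norm]

end Frobenius

theorem norm_div_sub_div_le {𝕜 : Type*} [NormedField 𝕜] {x y a b : 𝕜} {γ : ℝ} (hγ : 0 < γ)
    (ha : γ ≤ ‖a‖) (hba : ‖b - a‖ ≤ γ / 2) :
    ‖y / b - x / a‖ ≤ 2 / γ * ‖y - x‖ + 2 * ‖b - a‖ / γ ^ 2 * ‖x‖ := by
  have hb : γ / 2 ≤ ‖b‖ := by
    have := norm_sub_norm_le a b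
    rw [norm_sub_rev] at this
    linarith
  have ha0 : a ≠ 0 := norm_pos_iff.mp (by linarith)
  have hb0 : b ≠ 0 := norm_pos_iff.mp (by linarith)
  have hsplit : y / b - x / a = (y - x) / b - x * (b - a) / (a * b) := by
    field_simp
    ring
  calc ‖y / b - x / a‖ ≤ ‖y - x‖ / ‖b‖ + ‖x‖ * ‖b - a‖ / (‖a‖ * ‖b‖) := by
        rw [hsplit, ← norm_mul, ← norm_mul, ← norm_div, ← norm_div]
        exact norm_sub_le _ _
    _ ≤ ‖y - x‖ / (γ / 2) + ‖x‖ * ‖b - a‖ / (γ * (γ / 2)) := by gcongr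
    _ = 2 / γ * ‖y - x‖ + 2 * ‖b - a‖ / γ ^ 2 * ‖x‖ := by
        field_simp

-- Off the diagonal, `E * diagonal d - diagonal d * E = Y` wherever `d j ≠ d i`.
def offDiagCorrection {ι 𝕜 : Type*} [DecidableEq ι] [Field 𝕜] (Y : Matrix ι ι 𝕜) (d : ι → 𝕜) :
    Matrix ι ι 𝕜 :=
  of fun i j => if i = j then 0 else Y i j / (d j - d i)

theorem frob_offDiagCorrection_sub_le {n : ℕ} {Y Y' : Matrix (Fin n) (Fin n) ℂ}
    {e e' : Fin n → ℂ} {γ δ : ℝ} (hγ : 0 < γ) (hsep : ∀ i j, i ≠ j → γ ≤ ‖e i - e j‖)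
    (he : ∀ i, ‖e' i - e i‖ ≤ δ) (hδ₀ : 0 ≤ δ) (hδ : δ ≤ γ / 4) :
    frob (offDiagCorrection Y' e' - offDiagCorrection Y e)
      ≤ 2 / γ * frob (Y' - Y) + 4 * δ / γ ^ 2 * frob Y := by
  refine frob_le_of_norm_apply_le (by positivity) (by positivity) fun i j => ?_
  by_cases hij : i = j
  · simp only [offDiagCorrection, Matrix.sub_apply, of_apply, if_pos hij, sub_zero, norm_zero]
    positivity
  have hgap : ‖(e' j - e' i) - (e j - e i)‖ ≤ 2 * δ := by
    calc ‖(e' j - e' i) - (e j - e i)‖ = ‖(e' j - e j) - (e' i - e i)‖ := by congr 1; ring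
      _ ≤ δ + δ := (norm_sub_le _ _).trans (add_le_add (he j) (he i))
      _ = 2 * δ := by ring
  calc ‖(offDiagCorrection Y' e' - offDiagCorrection Y e) i j‖
      = ‖Y' i j / (e' j - e' i) - Y i j / (e j - e i)‖ := by
        simp only [offDiagCorrection, Matrix.sub_apply, of_apply, if_neg hij]
    _ ≤ 2 / γ * ‖Y' i j - Y i j‖ + 2 * ‖(e' j - e' i) - (e j - e i)‖ / γ ^ 2 * ‖Y i j‖ :=
        norm_div_sub_div_le hγ (hsep j i (Ne.symm hij)) (by linarith)
    _ ≤ 2 / γ * ‖(Y' - Y) i j‖ + 4 * δ / γ ^ 2 * ‖Y i j‖ := by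
        rw [Matrix.sub_apply]
        gcongr _ + ?_ / _ * _
        linarith

theorem W_method_correction_difference_bound_general {n : ℕ}
    (d : Fin n → ℂ)
    (Ystar YW : Matrix (Fin n) (Fin n) ℂ)
    (dstar dt : Fin n → ℂ)
    (hdstar : ∀ i, dstar i = d i + Ystar i i)
    (hdt : ∀ i, dt i = d i + YW i i)
    (γ η : ℝ) (hγpos : 0 < γ)
    (hγ : ∀ i j, i ≠ j → γ ≤ ‖dstar i - dstar j‖)
    (hη : η = frob (YW - Ystar))
    (hloc : η ≤ γ / 4)
    (Estar EW : Matrix (Fin n) (Fin n) ℂ)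
    (hEstar : ∀ i j, Estar i j = if i = j then 0 else Ystar i j / (dstar j - dstar i))
    (hEW : ∀ i j, EW i j = if i = j then 0 else YW i j / (dt j - dt i)) :
    frob (EW - Estar) ≤ (2 / γ + 4 * frob Ystar / γ ^ 2) * η := by
  have hEstar' : Estar = offDiagCorrection Ystar dstar := ext hEstar
  have hEW' : EW = offDiagCorrection YW dt := ext hEW
  have hdiag : ∀ i, ‖dt i - dstar i‖ ≤ η := fun i => by
    rw [hdt, hdstar, hη, add_sub_add_left_eq_sub, ← Matrix.sub_apply]
    exact norm_apply_le_frob _ i i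
  have hη₀ : 0 ≤ η := hη ▸ Real.sqrt_nonneg _
  calc frob (EW - Estar) ≤ 2 / γ * frob (YW - Ystar) + 4 * η / γ ^ 2 * frob Ystar := by
        rw [hEstar', hEW']
        exact frob_offDiagCorrection_sub_le hγpos hγ hdiag hη₀ hloc
    _ = (2 / γ + 4 * frob Ystar / γ ^ 2) * η := by rw [← hη]; ring

theorem W_method_correction_difference_bound {n : ℕ}
    (A V W : Matrix (Fin n) (Fin n) ℂ) (hV : IsUnit V.det)
    (d : Fin n → ℂ)
    (R Ystar YW : Matrix (Fin n) (Fin n) ℂ)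
    (hR : R = A * V - V * Matrix.diagonal d)
    (hYstar : Ystar = V⁻¹ * R)
    (hYW : YW = Wᴴ * R)
    (dstar dt : Fin n → ℂ)
    (hdstar : ∀ i, dstar i = d i + Ystar i i)
    (hdt : ∀ i, dt i = d i + YW i i)
    (γ η : ℝ) (hγpos : 0 < γ)
    (hγ : ∀ i j, i ≠ j → γ ≤ ‖dstar i - dstar j‖)
    (hη : η = frob (YW - Ystar))
    (hloc : η ≤ γ / 4)
    (Estar EW : Matrix (Fin n) (Fin n) ℂ)
    (hEstar : ∀ i j, Estar i j = if i = j then 0 else Ystar i j / (dstar j - dstar i))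
    (hEW : ∀ i j, EW i j = if i = j then 0 else YW i j / (dt j - dt i)) :
    frob (EW - Estar) ≤ (2 / γ + 4 * frob Ystar / γ ^ 2) * η :=
  W_method_correction_difference_bound_general d Ystar YW dstar dt hdstar hdt γ η hγpos hγ hη hloc
    Estar EW hEstar hEW
end

section
/- Under the local conditions of the W-method (γ = sep(D̃⋆) > 0, η = ‖Y_W − Y⋆‖_F ≤ γ/4, with D̃⋆ = D̂ + diag(Y⋆), D̃ = D̂ + diag(Y_W)), the updated residual of the W-method satisfies ‖V̂⁻¹(A Ṽ − Ṽ D̃)‖_F ≤ η + 2(‖Y⋆‖_F + η)²/γ, where Ṽ = V̂(I + Ẽ_W) and Ẽ_W is the componentwise W-method update. -/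
open Matrix

/-!
Conjugating by `V̂` turns the new residual into `(Y⋆ + D̂)(I + Ẽ) − (I + Ẽ)D̃`. Since `Ẽ_W` solves
the commutator equation `D̃Ẽ − ẼD̃ = diag(Y_W) − Y_W`, this collapses to the exact identity
`(Y⋆ − Y_W) + (Y⋆ − diag Y_W)Ẽ_W`. The diagonal of `Y_W` is within `η ≤ γ/4` of that of `Y⋆`,
so `sep(D̃) ≥ γ/2`, whence `‖Ẽ_W‖ ≤ 2‖Y_W‖/γ ≤ 2(‖Y⋆‖ + η)/γ`, while
`‖Y⋆ − diag Y_W‖ ≤ ‖Y⋆‖ + η`.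
-/

attribute [local instance] Matrix.frobeniusSeminormedAddCommGroup

namespace Matrix

section Frobenius

variable {m n α : Type*} [Fintype m] [Fintype n] [SeminormedAddCommGroup α]

theorem frobenius_norm_sq (A : Matrix m n α) : ‖A‖ ^ 2 = ∑ i, ∑ j, ‖A i j‖ ^ 2 := by
  change ‖WithLp.toLp 2 fun i => WithLp.toLp 2 (A i)‖ ^ 2 = _
  simp only [PiLp.norm_sq_eq_of_L2]

theorem norm_entry_le_frobenius_norm (A : Matrix m n α) (i : m) (j : n) : ‖A i j‖ ≤ ‖A‖ :=
  (PiLp.norm_apply_le (WithLp.toLp 2 (A i)) j).trans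
    (PiLp.norm_apply_le (WithLp.toLp 2 fun i => WithLp.toLp 2 (A i)) i)

theorem frobenius_norm_le_mul_of_forall_norm_le {β : Type*} [SeminormedAddCommGroup β]
    {A : Matrix m n α} {B : Matrix m n β} {c : ℝ} (hc : 0 ≤ c)
    (h : ∀ i j, ‖A i j‖ ≤ c * ‖B i j‖) : ‖A‖ ≤ c * ‖B‖ := by
  refine le_of_sq_le_sq ?_ (by positivity)
  rw [mul_pow, frobenius_norm_sq, frobenius_norm_sq, Finset.mul_sum]
  refine Finset.sum_le_sum fun i _ => ?_
  rw [Finset.mul_sum]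
  exact Finset.sum_le_sum fun j _ => by
    rw [← mul_pow]; exact pow_le_pow_left₀ (norm_nonneg _) (h i j) 2

theorem frobenius_norm_le_of_forall_norm_le {β : Type*} [SeminormedAddCommGroup β]
    {A : Matrix m n α} {B : Matrix m n β} (h : ∀ i j, ‖A i j‖ ≤ ‖B i j‖) : ‖A‖ ≤ ‖B‖ := by
  simpa using frobenius_norm_le_mul_of_forall_norm_le zero_le_one (by simpa using h)

end Frobenius

section Diagonal

variable {n α : Type*} [Fintype n] [DecidableEq n] [SeminormedAddCommGroup α]

theorem frobenius_norm_diagonal_diag_le (A : Matrix n n α) : ‖diagonal A.diag‖ ≤ ‖A‖ :=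
  frobenius_norm_le_of_forall_norm_le fun i j => by
    by_cases hij : i = j <;> simp [hij]

theorem frobenius_norm_sub_diagonal_diag_le (A : Matrix n n α) : ‖A - diagonal A.diag‖ ≤ ‖A‖ :=
  frobenius_norm_le_of_forall_norm_le fun i j => by
    by_cases hij : i = j <;> simp [hij]

theorem frobenius_norm_sub_diagonal_diag_le_add (A B : Matrix n n α) :
    ‖A - diagonal B.diag‖ ≤ ‖A‖ + ‖B - A‖ := by
  have hsplit : A - diagonal B.diag = (A - diagonal A.diag) - diagonal (B - A).diag := by
    ext i j; by_cases hij : i = j <;> simp [hij]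
  rw [hsplit]
  exact (norm_sub_le _ _).trans <| add_le_add (frobenius_norm_sub_diagonal_diag_le A)
    (frobenius_norm_diagonal_diag_le _)

end Diagonal

section Sylvester

variable {n : Type*} [Fintype n] [DecidableEq n]

/-- The W-method update: `Ẽ_W = sylvesterCorrection d̃ Y_W`. -/
def sylvesterCorrection {K : Type*} [DivisionRing K] (d : n → K) (M : Matrix n n K) :
    Matrix n n K :=
  of fun i j => if i = j then 0 else M i j / (d j - d i)

theorem diagonal_mul_sylvesterCorrection_sub {K : Type*} [Field K] {d : n → K}
    (hd : Function.Injective d) (M : Matrix n n K) :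
    diagonal d * sylvesterCorrection d M - sylvesterCorrection d M * diagonal d =
      diagonal M.diag - M := by
  ext i j
  by_cases hij : i = j
  · simp [hij, sylvesterCorrection]
  · have hne : d j - d i ≠ 0 := sub_ne_zero.2 (hd.ne (Ne.symm hij))
    simp only [sub_apply, diagonal_mul, mul_diagonal, sylvesterCorrection, of_apply,
      diagonal_apply_ne _ hij, if_neg hij]
    field_simp
    ring

theorem frobenius_norm_sylvesterCorrection_le {𝕜 : Type*} [NormedField 𝕜] {d : n → 𝕜} {s : ℝ}
    (hs : 0 < s) (hsep : ∀ i j, i ≠ j → s ≤ ‖d i - d j‖) (M : Matrix n n 𝕜) :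
    ‖sylvesterCorrection d M‖ ≤ ‖M‖ / s := by
  rw [div_eq_inv_mul]
  refine frobenius_norm_le_mul_of_forall_norm_le (inv_nonneg.2 hs.le) fun i j => ?_
  by_cases hij : i = j
  · simp only [sylvesterCorrection, of_apply, if_pos hij, norm_zero]
    positivity
  · rw [sylvesterCorrection, of_apply, if_neg hij, norm_div, div_eq_inv_mul]
    gcongr
    exact hsep j i (Ne.symm hij)

end Sylvester

theorem inv_mul_residual_mul_one_add_eq {n K : Type*} [Fintype n] [DecidableEq n] [CommRing K]
    {A V Y Y' E : Matrix n n K} {d d' : n → K} (hV : IsUnit V.det)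
    (hY : Y = V⁻¹ * (A * V - V * diagonal d)) (hd' : d' = d + Y'.diag)
    (hE : diagonal d' * E - E * diagonal d' = diagonal Y'.diag - Y') :
    V⁻¹ * (A * (V * (1 + E)) - V * (1 + E) * diagonal d') =
      (Y - Y') + (Y - diagonal Y'.diag) * E := by
  have hinv : V⁻¹ * V = 1 := nonsing_inv_mul V hV
  have hconj : V⁻¹ * A * V = Y + diagonal d := by
    rw [hY, Matrix.mul_sub, ← Matrix.mul_assoc, ← Matrix.mul_assoc, hinv, Matrix.one_mul]
    abel
  have hd : diagonal d = diagonal d' - diagonal Y'.diag := by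
    rw [hd', eq_sub_iff_add_eq]
    exact diagonal_add _ _
  calc V⁻¹ * (A * (V * (1 + E)) - V * (1 + E) * diagonal d')
      = V⁻¹ * A * V * (1 + E) - V⁻¹ * V * (1 + E) * diagonal d' := by noncomm_ring
    _ = (Y - Y') + (Y - diagonal Y'.diag) * E +
          ((diagonal d' * E - E * diagonal d') - (diagonal Y'.diag - Y')) := by
      rw [hconj, hinv, hd]; noncomm_ring
    _ = (Y - Y') + (Y - diagonal Y'.diag) * E := by rw [hE, sub_self, add_zero]

end Matrix

theorem sub_two_mul_le_norm_sub_of_forall_norm_sub_le {ι E : Type*} [SeminormedAddCommGroup E]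
    {a b : ι → E} {γ ε : ℝ} (hsep : ∀ i j, i ≠ j → γ ≤ ‖a i - a j‖)
    (hclose : ∀ i, ‖b i - a i‖ ≤ ε) {i j : ι} (hij : i ≠ j) : γ - 2 * ε ≤ ‖b i - b j‖ := by
  have htri : ‖a i - a j‖ ≤ ‖b i - b j‖ + ‖b i - a i‖ + ‖b j - a j‖ := by
    have : a i - a j = (b i - b j) - (b i - a i) + (b j - a j) := by abel
    rw [this]
    exact (norm_add_le _ _).trans (add_le_add_left (norm_sub_le _ _) _)
  linarith [hsep i j hij, hclose i, hclose j]

theorem frob_eq_norm {n : ℕ} (M : Matrix (Fin n) (Fin n) ℂ) : frob M = ‖M‖ := by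
  rw [frob, ← frobenius_norm_sq, Real.sqrt_sq (norm_nonneg M)]

theorem W_method_residual_bound_general {n : ℕ}
    (A V : Matrix (Fin n) (Fin n) ℂ) (hV : IsUnit V.det)
    (d : Fin n → ℂ)
    (R Ystar YW : Matrix (Fin n) (Fin n) ℂ)
    (hR : R = A * V - V * Matrix.diagonal d)
    (hYstar : Ystar = V⁻¹ * R)
    (dstar dt : Fin n → ℂ)
    (hdstar : ∀ i, dstar i = d i + Ystar i i)
    (hdt : ∀ i, dt i = d i + YW i i)
    (γ η : ℝ) (hγpos : 0 < γ)
    (hγ : ∀ i j, i ≠ j → γ ≤ ‖dstar i - dstar j‖)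
    (hη : η = frob (YW - Ystar))
    (hloc : η ≤ γ / 4)
    (EW : Matrix (Fin n) (Fin n) ℂ)
    (hEW : ∀ i j, EW i j = if i = j then 0 else YW i j / (dt j - dt i))
    (Vt : Matrix (Fin n) (Fin n) ℂ)
    (hVt : Vt = V * (1 + EW)) :
    frob (V⁻¹ * (A * Vt - Vt * Matrix.diagonal dt))
      ≤ η + 2 * (frob Ystar + η) ^ 2 / γ := by
  simp only [frob_eq_norm] at hη ⊢
  have hclose : ∀ i, ‖dt i - dstar i‖ ≤ η := fun i => by
    simpa [hdt, hdstar, hη] using norm_entry_le_frobenius_norm (YW - Ystar) i i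
  have hsep : ∀ i j, i ≠ j → γ / 2 ≤ ‖dt i - dt j‖ := fun i j hij => by
    linarith [sub_two_mul_le_norm_sub_of_forall_norm_sub_le hγ hclose hij]
  have hEW' : EW = sylvesterCorrection dt YW := ext hEW
  have hYW : ‖YW‖ ≤ ‖Ystar‖ + η := by
    simpa [hη] using norm_le_norm_add_norm_sub' YW Ystar
  have hEWnorm : ‖EW‖ ≤ (‖Ystar‖ + η) / (γ / 2) := hEW' ▸
    (frobenius_norm_sylvesterCorrection_le (half_pos hγpos) hsep YW).trans (by gcongr)
  have hinj : Function.Injective dt := fun i j h => by_contra fun hij => by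
    have := hsep i j hij
    rw [h, sub_self, norm_zero] at this
    linarith
  have hresidual := inv_mul_residual_mul_one_add_eq hV (hR ▸ hYstar) (funext hdt)
    (hEW' ▸ diagonal_mul_sylvesterCorrection_sub hinj YW)
  calc ‖V⁻¹ * (A * Vt - Vt * diagonal dt)‖
      = ‖(Ystar - YW) + (Ystar - diagonal YW.diag) * EW‖ := by rw [hVt, hresidual]
    _ ≤ η + (‖Ystar‖ + η) * ((‖Ystar‖ + η) / (γ / 2)) := by
      refine (norm_add_le _ _).trans (add_le_add (by rw [norm_sub_rev, hη]) ?_)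
      refine (frobenius_norm_mul _ _).trans (mul_le_mul ?_ hEWnorm (norm_nonneg _)
        (add_nonneg (norm_nonneg _) (hη ▸ norm_nonneg _)))
      simpa [hη, norm_sub_rev] using frobenius_norm_sub_diagonal_diag_le_add Ystar YW
    _ = η + 2 * (‖Ystar‖ + η) ^ 2 / γ := by field_simp

theorem W_method_residual_bound {n : ℕ}
    (A V W : Matrix (Fin n) (Fin n) ℂ) (hV : IsUnit V.det)
    (d : Fin n → ℂ)
    (R Ystar YW : Matrix (Fin n) (Fin n) ℂ)
    (hR : R = A * V - V * Matrix.diagonal d)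
    (hYstar : Ystar = V⁻¹ * R)
    (hYW : YW = Wᴴ * R)
    (dstar dt : Fin n → ℂ)
    (hdstar : ∀ i, dstar i = d i + Ystar i i)
    (hdt : ∀ i, dt i = d i + YW i i)
    (γ η : ℝ) (hγpos : 0 < γ)
    (hγ : ∀ i j, i ≠ j → γ ≤ ‖dstar i - dstar j‖)
    (hη : η = frob (YW - Ystar))
    (hloc : η ≤ γ / 4)
    (EW : Matrix (Fin n) (Fin n) ℂ)
    (hEW : ∀ i j, EW i j = if i = j then 0 else YW i j / (dt j - dt i))
    (Vt : Matrix (Fin n) (Fin n) ℂ)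
    (hVt : Vt = V * (1 + EW)) :
    frob (V⁻¹ * (A * Vt - Vt * Matrix.diagonal dt))
      ≤ η + 2 * (frob Ystar + η) ^ 2 / γ :=
  W_method_residual_bound_general A V hV d R Ystar YW hR hYstar dstar dt hdstar hdt γ η hγpos hγ hη
    hloc EW hEW Vt hVt
end
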